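/- arXiv:2211.16467 — 5 statements merged into one kernel-verified Lean document; each statement's English description precedes it below -/
import Mathlib

section
/- Suppose B_0, B_k ∈ ℝ^{d×d} and B_k = B_0 + e_{i} c^T for some index i and vector c ∈ ℝ^d. Then B_k^T B_k − B_0^T B_0 = (B_k^T e_i)(B_k^T e_i)^T − (B_0^T e_i)(B_0^T e_i)^T, and hence this difference has rank at most 2. -/
/-! `Bᵀ B = ∑ⱼ (Bᵀ eⱼ)(Bᵀ eⱼ)ᵀ` is the sum of the outer products of the rows of `B`, so for two
matrices differing only in row `i` all terms but the `i`-th cancel, leaving a difference of two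
rank-one matrices. -/

open Matrix

namespace Matrix

variable {m n R : Type*}

theorem rank_add_le [Fintype n] [Finite m] [Field R] (A B : Matrix m n R) :
    (A + B).rank ≤ A.rank + B.rank := by
  rw [rank, mulVecLin_add]
  exact (Submodule.finrank_mono (LinearMap.range_add_le _ _)).trans
    (Submodule.finrank_add_le_finrank_add_finrank _ _)

theorem rank_vecMulVec_sub_vecMulVec_le [Fintype n] [Finite m] [Field R]
    (u x : m → R) (v y : n → R) : (vecMulVec u v - vecMulVec x y).rank ≤ 2 := by
  rw [sub_eq_add_neg, ← neg_vecMulVec]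
  exact (rank_add_le _ _).trans (add_le_add (rank_vecMulVec_le _ _) (rank_vecMulVec_le _ _))

theorem transpose_mul_self_eq_sum_vecMulVec [Fintype m] [NonUnitalCommSemiring R]
    (A : Matrix m n R) : Aᵀ * A = ∑ j, vecMulVec (A j) (A j) := by
  ext a b
  simp [mul_apply, vecMulVec_apply, Matrix.sum_apply]

theorem transpose_mul_self_sub_of_rows_eq [Fintype m] [DecidableEq m] [CommRing R]
    {A B : Matrix m n R} {i : m} (h : ∀ j ≠ i, A j = B j) :
    Aᵀ * A - Bᵀ * B = vecMulVec (A i) (A i) - vecMulVec (B i) (B i) := by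
  have hrest : ∑ j ∈ {i}ᶜ, vecMulVec (A j) (A j) = ∑ j ∈ {i}ᶜ, vecMulVec (B j) (B j) :=
    Finset.sum_congr rfl fun j hj => by rw [h j (by simpa using hj)]
  rw [transpose_mul_self_eq_sum_vecMulVec, transpose_mul_self_eq_sum_vecMulVec,
    Fintype.sum_eq_add_sum_compl i, Fintype.sum_eq_add_sum_compl i, hrest]
  abel

theorem add_vecMulVec_single_one_apply_of_ne [DecidableEq m] [NonAssocSemiring R]
    (B : Matrix m n R) (c : n → R) {i j : m} (hj : j ≠ i) :
    (B + vecMulVec (Pi.single i 1) c) j = B j := by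
  ext k
  simp [vecMulVec_apply, hj]

theorem transpose_mulVec_single_one [Fintype m] [DecidableEq m] [NonAssocSemiring R]
    (B : Matrix m n R) (i : m) : Bᵀ *ᵥ Pi.single i 1 = B i := by
  rw [mulVec_single_one, col_transpose, row_def]

end Matrix

/-- If `B_k = B_0 + eᵢ cᵀ`, then
`Bₖᵀ Bₖ − B₀ᵀ B₀ = (Bₖᵀ eᵢ)(Bₖᵀ eᵢ)ᵀ − (B₀ᵀ eᵢ)(B₀ᵀ eᵢ)ᵀ`, and hence this
difference has rank at most 2. -/
theorem stmt3 (d : ℕ) (B0 Bk : Matrix (Fin d) (Fin d) ℝ) (i : Fin d) (c : Fin d → ℝ)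
    (h : Bk = B0 + Matrix.vecMulVec (Pi.single i 1) c) :
    Bkᵀ * Bk - B0ᵀ * B0 =
        Matrix.vecMulVec (Bkᵀ.mulVec (Pi.single i 1)) (Bkᵀ.mulVec (Pi.single i 1))
      - Matrix.vecMulVec (B0ᵀ.mulVec (Pi.single i 1)) (B0ᵀ.mulVec (Pi.single i 1))
    ∧ (Bkᵀ * Bk - B0ᵀ * B0).rank ≤ 2 := by
  have hrows : ∀ j ≠ i, Bk j = B0 j := fun j hj => by
    rw [h, add_vecMulVec_single_one_apply_of_ne B0 c hj]
  have hgram := transpose_mul_self_sub_of_rows_eq hrows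
  simp only [transpose_mulVec_single_one]
  exact ⟨hgram, hgram ▸ rank_vecMulVec_sub_vecMulVec_le _ _ _ _⟩
end

section
/- If B_0 is upper triangular with positive diagonal, and B_k = B_0 + e_i c^T where c = λ e_i − B_0^T e_i with λ > 0 (a perfect intervention at a source node, meaning row i of B_0 has its only nonzero entry at position (i,i)), then the difference B_k^T B_k − B_0^T B_0 has rank exactly 1 provided λ² ≠ (B_0)_{ii}². -/
/-!
The intervention replaces row `i` of `B₀` by `λ eᵢᵀ`. Since `Bᵀ B = ∑ₗ (row l)(row l)ᵀ`, changing one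
row changes the Gram matrix by `λ² eᵢ eᵢᵀ - rᵢ rᵢᵀ`, where `rᵢ` is the old row; at a source node
`rᵢ = (B₀)ᵢᵢ eᵢ`, so the difference is `(λ² - (B₀)ᵢᵢ²) eᵢ eᵢᵀ`, of rank one.
-/

open Matrix

namespace Matrix

variable {m n R : Type*}

theorem add_vecMulVec_single_sub_eq_updateRow [Fintype m] [DecidableEq m] [Ring R]
    (A : Matrix m n R) (i : m) (v : n → R) :
    A + vecMulVec (Pi.single i 1) (v - Aᵀ *ᵥ Pi.single i 1) = A.updateRow i v := by
  ext l j
  obtain rfl | hl := eq_or_ne l i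
  · simp [vecMulVec_apply]
  · simp [vecMulVec_apply, hl]

theorem transpose_mul_self_updateRow_sub [Fintype m] [DecidableEq m] [CommRing R]
    (A : Matrix m n R) (i : m) (v : n → R) :
    (A.updateRow i v)ᵀ * A.updateRow i v - Aᵀ * A = vecMulVec v v - vecMulVec (A i) (A i) := by
  ext j k
  simp only [sub_apply, mul_apply, transpose_apply, ← Finset.sum_sub_distrib, vecMulVec_apply]
  rw [Finset.sum_eq_single i (fun l _ hl ↦ by simp [updateRow_ne hl]) (by simp), updateRow_self]

theorem eq_zero_of_rank_eq_zero [Fintype n] [DecidableEq n] [Field R] {M : Matrix m n R}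
    (h : M.rank = 0) : M = 0 := by
  rw [rank, Submodule.finrank_eq_zero, LinearMap.range_eq_bot, ← toLin'_apply'] at h
  simpa using h

theorem rank_vecMulVec_of_ne_zero [Fintype n] [DecidableEq n] [Field R] {u : m → R}
    {v : n → R} (hu : u ≠ 0) (hv : v ≠ 0) : (vecMulVec u v).rank = 1 := by
  refine le_antisymm (rank_vecMulVec_le u v) (Nat.one_le_iff_ne_zero.mpr fun h ↦ ?_)
  obtain ⟨j, hj⟩ := Function.ne_iff.mp hu
  obtain ⟨k, hk⟩ := Function.ne_iff.mp hv
  exact mul_ne_zero hj hk congr($(eq_zero_of_rank_eq_zero h) j k)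

end Matrix

theorem stmt5_general (d : ℕ) (B0 Bk : Matrix (Fin d) (Fin d) ℝ) (i : Fin d) (lam : ℝ)
    (hsource : ∀ j, j ≠ i → B0 i j = 0)
    (hB : Bk = B0 + Matrix.vecMulVec (Pi.single i 1)
        (lam • (Pi.single i 1 : Fin d → ℝ) - B0ᵀ.mulVec (Pi.single i 1)))
    (hne : lam ^ 2 ≠ (B0 i i) ^ 2) :
    (Bkᵀ * Bk - B0ᵀ * B0).rank = 1 := by
  set e : Fin d → ℝ := Pi.single i 1
  set b := B0 i i
  have hrow : B0 i = b • e := by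
    ext j
    obtain rfl | hj := eq_or_ne j i
    · simp [e, b]
    · simp [e, hj, hsource j hj]
  have hdiff : Bkᵀ * Bk - B0ᵀ * B0 = vecMulVec ((lam ^ 2 - b ^ 2) • e) e := by
    rw [hB, add_vecMulVec_single_sub_eq_updateRow, transpose_mul_self_updateRow_sub, hrow,
      smul_vecMulVec, vecMulVec_smul, smul_vecMulVec, vecMulVec_smul, smul_smul, smul_smul,
      ← sub_smul, smul_vecMulVec, sq, sq]
  have he : e ≠ 0 := by simp [e]
  rw [hdiff]
  exact rank_vecMulVec_of_ne_zero (smul_ne_zero (sub_ne_zero.mpr hne) he) he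

/-- Perfect intervention at a source node: if `B_0` is upper triangular with
positive diagonal, row `i` of `B_0` is nonzero only at position `(i,i)`
(source node), and `B_k = B_0 + eᵢ (λ eᵢ − B₀ᵀ eᵢ)ᵀ` with `λ > 0` and
`λ² ≠ (B₀)ᵢᵢ²`, then `Bₖᵀ Bₖ − B₀ᵀ B₀` has rank exactly 1. -/
theorem stmt5 (d : ℕ) (B0 Bk : Matrix (Fin d) (Fin d) ℝ) (i : Fin d) (lam : ℝ)
    (hupper : B0.BlockTriangular id) (hdiag : ∀ j, 0 < B0 j j)
    (hsource : ∀ j, j ≠ i → B0 i j = 0)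
    (hlam : 0 < lam)
    (hB : Bk = B0 + Matrix.vecMulVec (Pi.single i 1)
        (lam • (Pi.single i 1 : Fin d → ℝ) - B0ᵀ.mulVec (Pi.single i 1)))
    (hne : lam ^ 2 ≠ (B0 i i) ^ 2) :
    (Bkᵀ * Bk - B0ᵀ * B0).rank = 1 :=
  stmt5_general d B0 Bk i lam hsource hB hne
end

section
/- Let H ∈ ℝ^{d×p} have full row rank and let ≺ be a partial order on {1,...,d}. Then there exists a decomposition H = R Q where R ∈ ℝ^{d×d} satisfies R_{ii} ≥ 0 and R_{ij} = 0 unless i ⪯ j, and each row q_i of Q ∈ ℝ^{d×p} has unit norm and is orthogonal to the span of {q_j : i ≺ j}. -/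
/-!
Gram–Schmidt along the partial order, from the top down. The rows `hᵢ` of `H` are linearly
independent; let `Vᵢ` be the span of the rows `hⱼ` with `i ≺ j` and `uᵢ` the component of `hᵢ`
orthogonal to `Vᵢ`, so `uᵢ ≠ 0`, and put `qᵢ = uᵢ / ‖uᵢ‖`. If `i ≺ j` then `Vⱼ ≤ Vᵢ`, hence
`qⱼ ∈ Vᵢ ⊥ qᵢ`. Well-founded induction down the finite order gives `Vᵢ ≤ span {qⱼ | i ≺ j}`, so
`hᵢ = ‖uᵢ‖ qᵢ + (projection of hᵢ on Vᵢ)` is a combination of the `qⱼ` with `i ⪯ j` whose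
diagonal coefficient is `‖uᵢ‖ ≥ 0`.
-/

open Submodule Set

theorem Matrix.linearIndependent_row_of_rank_eq_card {R m n : Type*} [Field R] [Fintype m]
    [Fintype n] {A : Matrix m n R} (hA : A.rank = Fintype.card m) : LinearIndependent R A.row := by
  rw [linearIndependent_iff_card_eq_finrank_span, ← hA, A.rank_eq_finrank_span_row, Set.finrank]

theorem exists_fun_sum_smul_eq_of_mem_span_image {R M ι : Type*} [Semiring R] [AddCommMonoid M]
    [Module R M] [Fintype ι] {v : ι → M} {s : Set ι} {x : M} (hx : x ∈ span R (v '' s)) :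
    ∃ c : ι → R, (∀ j ∉ s, c j = 0) ∧ ∑ j, c j • v j = x := by
  obtain ⟨l, hl, rfl⟩ := (Finsupp.mem_span_image_iff_linearCombination R).1 hx
  exact ⟨l, fun j hj ↦ Finsupp.notMem_support_iff.1 (fun h ↦ hj (hl h)),
    by rw [Finsupp.linearCombination_apply, Finsupp.sum_fintype _ _ (by simp)]⟩

section UpperGramSchmidt

variable {E ι : Type*} [NormedAddCommGroup E] [InnerProductSpace ℝ E] [PartialOrder ι]
  (v : ι → E)

def strictUpperSpan (i : ι) : Submodule ℝ E := span ℝ (v '' Ioi i)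

variable {v} in
theorem strictUpperSpan_anti {i j : ι} (hij : i ≤ j) :
    strictUpperSpan v j ≤ strictUpperSpan v i :=
  span_mono (image_mono (Ioi_subset_Ioi hij))

instance [Finite ι] (i : ι) : (strictUpperSpan v i).HasOrthogonalProjection :=
  haveI := FiniteDimensional.span_of_finite ℝ (toFinite (v '' Ioi i))
  inferInstanceAs (span ℝ (v '' Ioi i)).HasOrthogonalProjection

variable [Finite ι]

noncomputable def upperGramSchmidt (i : ι) : E :=
  v i - (strictUpperSpan v i).starProjection (v i)

noncomputable def upperGramSchmidtNormed (i : ι) : E :=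
  ‖upperGramSchmidt v i‖⁻¹ • upperGramSchmidt v i

variable {v}

theorem upperGramSchmidt_mem_orthogonal (i : ι) :
    upperGramSchmidt v i ∈ (strictUpperSpan v i)ᗮ :=
  sub_starProjection_mem_orthogonal _

theorem upperGramSchmidt_mem_strictUpperSpan {i j : ι} (hij : i < j) :
    upperGramSchmidt v j ∈ strictUpperSpan v i :=
  sub_mem (subset_span (mem_image_of_mem v hij))
    (strictUpperSpan_anti hij.le (starProjection_apply_mem _ _))

theorem inner_upperGramSchmidtNormed_eq_zero {i j : ι} (hij : i < j) :
    inner ℝ (upperGramSchmidtNormed v i) (upperGramSchmidtNormed v j) = 0 :=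
  (mem_orthogonal' _ _).1 (smul_mem _ _ (upperGramSchmidt_mem_orthogonal i)) _
    (smul_mem _ _ (upperGramSchmidt_mem_strictUpperSpan hij))

theorem upperGramSchmidt_ne_zero (hv : LinearIndependent ℝ v) (i : ι) :
    upperGramSchmidt v i ≠ 0 := by
  intro h
  rw [upperGramSchmidt, sub_eq_zero] at h
  have hmem : v i ∈ strictUpperSpan v i := h ▸ starProjection_apply_mem _ _
  exact hv.notMem_span_image self_notMem_Ioi hmem

theorem norm_upperGramSchmidtNormed (hv : LinearIndependent ℝ v) (i : ι) :
    ‖upperGramSchmidtNormed v i‖ = 1 :=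
  norm_smul_inv_norm (upperGramSchmidt_ne_zero hv i)

theorem norm_smul_upperGramSchmidtNormed (i : ι) :
    ‖upperGramSchmidt v i‖ • upperGramSchmidtNormed v i = upperGramSchmidt v i := by
  rcases eq_or_ne (upperGramSchmidt v i) 0 with h | h
  · simp [upperGramSchmidtNormed, h]
  · exact smul_inv_smul₀ (norm_ne_zero_iff.2 h) _

theorem eq_smul_upperGramSchmidtNormed_add (i : ι) :
    v i = ‖upperGramSchmidt v i‖ • upperGramSchmidtNormed v i
      + (strictUpperSpan v i).starProjection (v i) := by
  rw [norm_smul_upperGramSchmidtNormed, upperGramSchmidt, sub_add_cancel]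

theorem strictUpperSpan_le_span_upperGramSchmidtNormed (i : ι) :
    strictUpperSpan v i ≤ span ℝ (upperGramSchmidtNormed v '' Ioi i) := by
  induction i using WellFoundedGT.induction with
  | _ i ih =>
    refine span_le.2 ?_
    rintro _ ⟨j, hij, rfl⟩
    rw [eq_smul_upperGramSchmidtNormed_add (v := v) j]
    exact add_mem (smul_mem _ _ (subset_span (mem_image_of_mem _ hij)))
      (span_mono (image_mono (Ioi_subset_Ioi hij.le)) (ih j hij (starProjection_apply_mem _ _)))

end UpperGramSchmidt

theorem exists_upperTriangular_eq_sum_upperGramSchmidtNormed {E ι : Type*}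
    [NormedAddCommGroup E] [InnerProductSpace ℝ E] [PartialOrder ι] [Fintype ι] (v : ι → E) :
    ∃ R : Matrix ι ι ℝ, (∀ i, 0 ≤ R i i) ∧ (∀ i j, ¬ i ≤ j → R i j = 0) ∧
      ∀ i, v i = ∑ j, R i j • upperGramSchmidtNormed v j := by
  classical
  choose c hc_supp hc_sum using fun i ↦ exists_fun_sum_smul_eq_of_mem_span_image
    (strictUpperSpan_le_span_upperGramSchmidtNormed (v := v) i (starProjection_apply_mem _ (v i)))
  refine ⟨fun i ↦ Pi.single i ‖upperGramSchmidt v i‖ + c i, fun i ↦ ?_, fun i j hij ↦ ?_,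
    fun i ↦ ?_⟩
  · simp [hc_supp i i (lt_irrefl i)]
  · have hji : j ≠ i := fun h ↦ hij (h ▸ le_rfl)
    simp [hji, hc_supp i j (mt le_of_lt hij)]
  · simp only [Pi.add_apply, add_smul, Finset.sum_add_distrib, hc_sum, Pi.single_apply, ite_smul,
      zero_smul, Finset.sum_ite_eq', Finset.mem_univ, if_true]
    exact eq_smul_upperGramSchmidtNormed_add i

/-- Existence of the partial order RQ decomposition: for `H ∈ ℝ^{d×p}` of full
row rank and a partial order `r` on `{1,…,d}`, there are `R ∈ ℝ^{d×d}` with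
`Rᵢᵢ ≥ 0` and `Rᵢⱼ = 0` unless `i ⪯ j`, and `Q ∈ ℝ^{d×p}` whose rows have
unit norm and satisfy `qᵢ ⊥ qⱼ` whenever `i ≺ j`, such that `H = R Q`. -/
theorem stmt6 (d p : ℕ) (H : Matrix (Fin d) (Fin p) ℝ) (hH : H.rank = d)
    (r : Fin d → Fin d → Prop) (hr : IsPartialOrder (Fin d) r) :
    ∃ (R : Matrix (Fin d) (Fin d) ℝ) (Q : Matrix (Fin d) (Fin p) ℝ),
      H = R * Q ∧
      (∀ i, 0 ≤ R i i) ∧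
      (∀ i j, ¬ r i j → R i j = 0) ∧
      (∀ i, ∑ x, Q i x ^ 2 = 1) ∧
      (∀ i j, r i j → i ≠ j → ∑ x, Q i x * Q j x = 0) := by
  -- from here on `≤` on `Fin d` is `r`, not the usual order
  let _ : PartialOrder (Fin d) :=
    { le := r, lt := fun i j ↦ r i j ∧ ¬ r j i, le_refl := hr.refl, le_trans := hr.trans,
      le_antisymm := hr.antisymm, lt_iff_le_not_ge := fun _ _ ↦ Iff.rfl }
  let v : Fin d → EuclideanSpace ℝ (Fin p) := fun i ↦ WithLp.toLp 2 (H i)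
  have hrow : LinearIndependent ℝ H.row :=
    Matrix.linearIndependent_row_of_rank_eq_card (by rw [hH, Fintype.card_fin])
  have hv : LinearIndependent ℝ v :=
    hrow.map' (WithLp.linearEquiv 2 ℝ (Fin p → ℝ)).symm.toLinearMap (LinearEquiv.ker _)
  obtain ⟨R, hR_diag, hR_zero, hvR⟩ := exists_upperTriangular_eq_sum_upperGramSchmidtNormed v
  set q := upperGramSchmidtNormed v
  refine ⟨R, Matrix.of fun i x ↦ q i x, ?_, hR_diag, hR_zero, fun i ↦ ?_, fun i j hij hne ↦ ?_⟩
  · ext i x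
    simpa [Matrix.mul_apply] using congrArg (fun w : EuclideanSpace ℝ (Fin p) ↦ w x) (hvR i)
  · simpa [norm_upperGramSchmidtNormed hv i, q] using (EuclideanSpace.real_norm_sq_eq (q i)).symm
  · simpa [EuclideanSpace.inner_eq_star_dotProduct, dotProduct, mul_comm] using
      inner_upperGramSchmidtNormed_eq_zero (v := v) (lt_of_le_of_ne hij hne)
end

section
/- Let B_0, B_1 ∈ ℝ^{2×2} be upper triangular with positive diagonals agreeing in the first row ((B_0)_{11} = (B_1)_{11}, (B_0)_{12} = (B_1)_{12}), and let H ∈ ℝ^{2×2}. Define Ĥ with first row (B_0)_{11} h_1 + (B_0)_{12} h_2 (where h_1, h_2 are the rows of H) and second row h_2, and define B̂_k = diag(1, (B_k)_{22}) for k = 0, 1. Then B̂_k Ĥ = B_k H for k = 0, 1. -/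
/-- Motivating non-identifiability example in dimension 2: if `B₀, B₁` are
upper triangular with positive diagonals agreeing in the first row, `Ĥ` has
first row `(B₀)₁₁ h₁ + (B₀)₁₂ h₂` and second row `h₂`, and
`B̂_k = diag(1, (B_k)₂₂)`, then `B̂_k Ĥ = B_k H` for `k = 0, 1`. -/
theorem stmt12 (B0 B1 H : Matrix (Fin 2) (Fin 2) ℝ)
    (hB0low : B0 1 0 = 0) (hB1low : B1 1 0 = 0)
    (hB0diag : 0 < B0 0 0 ∧ 0 < B0 1 1) (hB1diag : 0 < B1 0 0 ∧ 0 < B1 1 1)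
    (hrow1 : B0 0 0 = B1 0 0 ∧ B0 0 1 = B1 0 1)
    (Hhat : Matrix (Fin 2) (Fin 2) ℝ)
    (hHhat : ∀ j, Hhat 0 j = B0 0 0 * H 0 j + B0 0 1 * H 1 j ∧ Hhat 1 j = H 1 j)
    (B0hat B1hat : Matrix (Fin 2) (Fin 2) ℝ)
    (hB0hat : B0hat = Matrix.diagonal ![1, B0 1 1])
    (hB1hat : B1hat = Matrix.diagonal ![1, B1 1 1]) :
    B0hat * Hhat = B0 * H ∧ B1hat * Hhat = B1 * H := by
  subst hB0hat hB1hat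
  constructor <;> ext i j <;>
    fin_cases i <;>
    simp [Matrix.mul_apply, Fin.sum_univ_two, (hHhat j).1, (hHhat j).2,
      hB0low, hB1low, hrow1.1, hrow1.2, Matrix.diagonal]
end

section
/- Let B_0 = [[1,1],[0,1]], B_1 = [[2,2],[0,1]], B_2 = [[1,1],[0,2]], G = I_2, and let B̂_0 = [[1,0],[0,1]], B̂_1 = [[2,0],[0,1]], B̂_2 = [[1,0],[0,2]], Ĝ = [[1,−1],[0,1]]. Then for each k ∈ {0,1,2}, with H = G^{-1} and Ĥ = Ĝ^{-1}, we have H^T B_k^T B_k H = Ĥ^T B̂_k^T B̂_k Ĥ, even though B̂_0 is diagonal while B_0 is not. -/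
/-!
Since `H = 1` and `Ĥ = !![1, 1; 0, 1]`, we have `B_k H = B̂_k Ĥ` for every `k`: the
non-generic intervention rescales the whole first row of `B₀`, so the off-diagonal entry of
`B₀` can be absorbed into the mixing matrix. Hence `Θ_k = (B_k H)ᵀ (B_k H)` is the same for
both parameterizations.
-/

open Matrix

theorem transpose_mul_transpose_mul_mul_eq_of_mul_eq {R m n n' p : Type*} [CommSemiring R]
    [Fintype m] [Fintype n] [Fintype n'] {B : Matrix m n R} {H : Matrix n p R}
    {B' : Matrix m n' R} {H' : Matrix n' p R} (h : B * H = B' * H') :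
    Hᵀ * Bᵀ * B * H = H'ᵀ * B'ᵀ * B' * H' := by
  calc Hᵀ * Bᵀ * B * H = (B * H)ᵀ * (B * H) := by simp only [transpose_mul, Matrix.mul_assoc]
    _ = (B' * H')ᵀ * (B' * H') := by rw [h]
    _ = H'ᵀ * B'ᵀ * B' * H' := by simp only [transpose_mul, Matrix.mul_assoc]

theorem inv_fin_two_unitriangular {R : Type*} [CommRing R] (a : R) :
    (!![1, -a; 0, 1] : Matrix (Fin 2) (Fin 2) R)⁻¹ = !![1, a; 0, 1] :=
  inv_eq_right_inv (by simp [one_fin_two])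

/-- Explicit 2×2 counterexample for non-generic soft interventions: the two
distinct parameterizations `(B₀,B₁,B₂,G)` and `(B̂₀,B̂₁,B̂₂,Ĝ)` produce the
same precision matrices `Θ_k = Hᵀ B_kᵀ B_k H` (with `H = G⁻¹`, `Ĥ = Ĝ⁻¹`)
in all three contexts, even though `B̂₀` is diagonal while `B₀` is not. -/
theorem stmt19 :
    let B0 : Matrix (Fin 2) (Fin 2) ℝ := !![1, 1; 0, 1]
    let B1 : Matrix (Fin 2) (Fin 2) ℝ := !![2, 2; 0, 1]
    let B2 : Matrix (Fin 2) (Fin 2) ℝ := !![1, 1; 0, 2]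
    let G : Matrix (Fin 2) (Fin 2) ℝ := 1
    let B0hat : Matrix (Fin 2) (Fin 2) ℝ := !![1, 0; 0, 1]
    let B1hat : Matrix (Fin 2) (Fin 2) ℝ := !![2, 0; 0, 1]
    let B2hat : Matrix (Fin 2) (Fin 2) ℝ := !![1, 0; 0, 2]
    let Ghat : Matrix (Fin 2) (Fin 2) ℝ := !![1, -1; 0, 1]
    let H := G⁻¹
    let Hhat := Ghat⁻¹
    (Hᵀ * B0ᵀ * B0 * H = Hhatᵀ * B0hatᵀ * B0hat * Hhat) ∧
    (Hᵀ * B1ᵀ * B1 * H = Hhatᵀ * B1hatᵀ * B1hat * Hhat) ∧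
    (Hᵀ * B2ᵀ * B2 * H = Hhatᵀ * B2hatᵀ * B2hat * Hhat) ∧
    (B0hat 0 1 = 0 ∧ B0hat 1 0 = 0) ∧ B0 0 1 ≠ 0 := by
  intro B0 B1 B2 G B0hat B1hat B2hat Ghat H Hhat
  have hH : H = 1 := inv_one
  have hHhat : Hhat = !![1, 1; 0, 1] := inv_fin_two_unitriangular 1
  refine ⟨transpose_mul_transpose_mul_mul_eq_of_mul_eq ?_,
    transpose_mul_transpose_mul_mul_eq_of_mul_eq ?_,
    transpose_mul_transpose_mul_mul_eq_of_mul_eq ?_, ⟨rfl, rfl⟩, one_ne_zero⟩ <;>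
  · rw [hH, hHhat, Matrix.mul_one]
    simp [B0, B1, B2, B0hat, B1hat, B2hat]
end
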